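/- arXiv:1309.7066 — 2 statements merged into one kernel-verified Lean document; each statement's English description precedes it below -/
import Mathlib

section
/- Let G be a connected r-regular simple graph on N ≥ 2 vertices. Then for every integer k ≥ 1, the average shortest path length ⟨D⟩ := (1/(N(N−1))) · ∑_{(u,v): u ≠ v} dist(u,v) satisfies ⟨D⟩ ≥ ( ∑_{j=1}^{k−1} j·r(r−1)^{j−1} + k·R ) / (N−1), where R := (N−1) − ∑_{j=1}^{k−1} r(r−1)^{j−1}. (This is the lower bound d* on average shortest path length for any r-regular network of size N used in the paper, taking k to be the largest integer with R ≥ 0.) -/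
/-!
Fix a vertex `u`. Every vertex at distance `j + 2` from `u` has a neighbour at distance `j + 1`,
and every vertex at distance `j + 1 ≥ 1` has at most `r - 1` neighbours at distance `j + 2`
(one of its `r` neighbours lies at distance `j`). Double counting gives the Moore bound
`r (r - 1)^(j - 1)` on the number of vertices at distance `j ≥ 1`. Hence at most
`A_j = ∑_{i=1}^{j} r (r - 1)^(i - 1)` vertices `v ≠ u` have `dist u v ≤ j`, and
`∑_v dist u v ≥ ∑_{j<k} #{v ≠ u | j < dist u v} ≥ ∑_{j<k} (N - 1 - A_j)`, which is the numerator of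
the bound rearranged. Summing over `u` gives `N (N - 1)` times the bound.
-/

open Finset

-- `∑_{v ∈ t} d v ≥ ∑_{j < k} #{v ∈ t | j < d v}`, by counting the pairs `(j, v)` with `j < d v`.
lemma sum_range_card_sub_le_sum {ι R : Type*} [CommRing R] [LinearOrder R]
    [IsStrictOrderedRing R] (t : Finset ι) (d : ι → ℕ) (A : ℕ → R) (k : ℕ)
    (hA : ∀ j < k, (#{v ∈ t | d v ≤ j} : R) ≤ A j) :
    ∑ j ∈ range k, ((#t : R) - A j) ≤ ∑ v ∈ t, (d v : R) := by
  have htail (j : ℕ) : (#t : R) = #{v ∈ t | d v ≤ j} + #{v ∈ t | j < d v} := by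
    rw [← Nat.cast_add, ← card_filter_add_card_filter_not (fun v => d v ≤ j)]
    simp only [not_le]
  calc ∑ j ∈ range k, ((#t : R) - A j) ≤ ∑ j ∈ range k, (#{v ∈ t | j < d v} : R) :=
        sum_le_sum fun j hj => by linarith [htail j, hA j (mem_range.mp hj)]
    _ = ∑ v ∈ t, (#{j ∈ range k | j < d v} : R) := by
        simp only [card_filter, Nat.cast_sum]
        exact sum_comm
    _ ≤ ∑ v ∈ t, (d v : R) := sum_le_sum fun v _ => by
        calc (#{j ∈ range k | j < d v} : R) ≤ #(range (d v)) := by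
              exact_mod_cast card_le_card fun j hj => by simp_all
          _ = d v := by rw [card_range]

lemma sum_Icc_mul_add_mul_sub_sum_Icc {R : Type*} [CommRing R] (M : R) (a : ℕ → R) (k : ℕ) :
    ∑ j ∈ Icc 1 (k - 1), (j : R) * a j + k * (M - ∑ j ∈ Icc 1 (k - 1), a j)
      = ∑ j ∈ range k, (M - ∑ i ∈ Icc 1 j, a i) := by
  induction k with
  | zero => simp
  | succ k ih =>
    rw [sum_range_succ, ← ih]
    rcases k with _ | k
    · simp
    · simp only [Nat.add_sub_cancel, sum_Icc_succ_top (by omega : 1 ≤ k + 1)]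
      push_cast
      ring

-- Both sides vanish at `r = 0`, where the truncated `r - 1` would otherwise differ.
lemma Nat.cast_mul_sub_one_pow {R : Type*} [Ring R] (r n : ℕ) :
    ((r * (r - 1) ^ n : ℕ) : R) = r * ((r : R) - 1) ^ n := by
  rcases r with _ | r <;> simp

namespace SimpleGraph

variable {V : Type*} {G : SimpleGraph V}

lemma Reachable.exists_adj_dist_eq_of_dist_eq_succ {u v : V} (hr : G.Reachable u v) {j : ℕ}
    (h : G.dist u v = j + 1) : ∃ w, G.Adj w v ∧ G.dist u w = j := by
  obtain ⟨p, hp⟩ := hr.symm.exists_walk_length_eq_dist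
  rw [dist_comm, h] at hp
  cases p with
  | nil => simp at hp
  | @cons _ w _ hadj q =>
    refine ⟨w, hadj.symm, le_antisymm ?_ ?_⟩
    · simp only [Walk.length_cons, add_left_inj] at hp
      simpa [hp] using dist_le q.reverse
    · have := (hr.trans hadj.symm.reachable.symm).dist_triangle_left v
      have := dist_eq_one_iff_adj.mpr hadj.symm
      omega

variable [Fintype V] [DecidableRel G.Adj] {r : ℕ}

lemma card_filter_dist_eq_one_le (hreg : G.IsRegularOfDegree r) (u : V) :
    #{v | G.dist u v = 1} ≤ r := by
  rw [← hreg u, ← card_neighborFinset_eq_degree]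
  exact card_le_card fun v hv => by simpa using hv

lemma card_filter_dist_eq_add_two_le (hconn : G.Connected) (hreg : G.IsRegularOfDegree r)
    (u : V) (j : ℕ) :
    #{v | G.dist u v = j + 2} ≤ (r - 1) * #{v | G.dist u v = j + 1} := by
  classical
  have key := card_mul_le_card_mul (r := fun v w => G.Adj v w) (m := 1) (n := r - 1)
    (s := {v | G.dist u v = j + 2}) (t := {v | G.dist u v = j + 1}) ?_ ?_
  · simpa [mul_comm] using key
  · intro v hv
    obtain ⟨w, hwv, hw⟩ := (hconn u v).exists_adj_dist_eq_of_dist_eq_succ (by simpa using hv)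
    exact one_le_card.mpr ⟨w, by simp [bipartiteAbove, hw, hwv.symm]⟩
  · intro w hw
    obtain ⟨x, hxw, hx⟩ := (hconn u w).exists_adj_dist_eq_of_dist_eq_succ (by simpa using hw)
    have hsub : bipartiteBelow (fun v w => G.Adj v w) {v | G.dist u v = j + 2} w ⊆
        (G.neighborFinset w).erase x := by
      intro v hv
      simp only [bipartiteBelow, mem_filter, mem_univ, true_and] at hv
      simp only [mem_erase, mem_neighborFinset]
      exact ⟨by rintro rfl; omega, hv.2.symm⟩
    calc _ ≤ #((G.neighborFinset w).erase x) := card_le_card hsub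
      _ = r - 1 := by
        rw [card_erase_of_mem (by simpa using hxw.symm), card_neighborFinset_eq_degree, hreg w]

lemma card_filter_dist_eq_succ_le (hconn : G.Connected) (hreg : G.IsRegularOfDegree r)
    (u : V) (j : ℕ) : #{v | G.dist u v = j + 1} ≤ r * (r - 1) ^ j := by
  induction j with
  | zero => simpa using card_filter_dist_eq_one_le hreg u
  | succ j ih =>
    calc _ ≤ (r - 1) * #{v | G.dist u v = j + 1} := card_filter_dist_eq_add_two_le hconn hreg u j
      _ ≤ (r - 1) * (r * (r - 1) ^ j) := Nat.mul_le_mul_left _ ih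
      _ = r * (r - 1) ^ (j + 1) := by ring

lemma card_filter_dist_le_le [DecidableEq V] (hconn : G.Connected)
    (hreg : G.IsRegularOfDegree r) (u : V) (j : ℕ) :
    #{v ∈ univ.erase u | G.dist u v ≤ j} ≤ ∑ i ∈ Icc 1 j, r * (r - 1) ^ (i - 1) := by
  have hmaps : ∀ v ∈ {v ∈ univ.erase u | G.dist u v ≤ j}, G.dist u v ∈ Icc 1 j := by
    intro v hv
    simp only [mem_filter, mem_erase] at hv
    have := hconn.pos_dist_of_ne hv.1.1.symm
    simp only [mem_Icc]
    omega
  rw [card_eq_sum_card_fiberwise hmaps]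
  refine sum_le_sum fun i hi => ?_
  calc _ ≤ #{v | G.dist u v = (i - 1) + 1} := by
        refine card_le_card fun v hv => ?_
        simp only [mem_filter] at hv ⊢
        simp only [mem_Icc] at hi
        exact ⟨mem_univ v, by omega⟩
    _ ≤ r * (r - 1) ^ (i - 1) := card_filter_dist_eq_succ_le hconn hreg u (i - 1)

lemma sum_range_sub_sum_le_sum_dist [DecidableEq V] (hconn : G.Connected)
    (hreg : G.IsRegularOfDegree r) (u : V) (k : ℕ) :
    ∑ j ∈ range k, ((Fintype.card V : ℝ) - 1 - ∑ i ∈ Icc 1 j, (r : ℝ) * ((r : ℝ) - 1) ^ (i - 1))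
      ≤ ∑ v, (G.dist u v : ℝ) := by
  have hcard : (Fintype.card V : ℝ) - 1 = #(univ.erase u) := by
    rw [card_erase_of_mem (mem_univ u), card_univ, Nat.cast_sub (Fintype.card_pos_iff.mpr ⟨u⟩),
      Nat.cast_one]
  rw [hcard, ← sum_erase univ (a := u) (by simp)]
  refine sum_range_card_sub_le_sum _ _ _ k fun j _ => ?_
  calc (#{v ∈ univ.erase u | G.dist u v ≤ j} : ℝ)
      ≤ ((∑ i ∈ Icc 1 j, r * (r - 1) ^ (i - 1) : ℕ) : ℝ) := by
        exact_mod_cast G.card_filter_dist_le_le hconn hreg u j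
    _ = _ := by simp only [Nat.cast_sum, Nat.cast_mul_sub_one_pow]

end SimpleGraph

theorem stmt_5_general {V : Type*} [Fintype V] [DecidableEq V] (G : SimpleGraph V)
    [DecidableRel G.Adj] (N r : ℕ) (hN : Fintype.card V = N)
    (hconn : G.Connected) (hreg : G.IsRegularOfDegree r)
    (k : ℕ) :
    ((∑ j ∈ Finset.Icc 1 (k - 1), (j : ℝ) * (r : ℝ) * ((r : ℝ) - 1) ^ (j - 1))
        + (k : ℝ) * (((N : ℝ) - 1)
            - ∑ j ∈ Finset.Icc 1 (k - 1), (r : ℝ) * ((r : ℝ) - 1) ^ (j - 1)))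
        / ((N : ℝ) - 1)
      ≤ (1 / ((N : ℝ) * ((N : ℝ) - 1)))
          * ∑ p ∈ univ.offDiag, (G.dist p.1 p.2 : ℝ) := by
  subst hN
  have := hconn.nonempty
  set T := ∑ j ∈ range k,
    ((Fintype.card V : ℝ) - 1 - ∑ i ∈ Icc 1 j, (r : ℝ) * ((r : ℝ) - 1) ^ (i - 1))
  have hsum : Fintype.card V * T ≤ ∑ p ∈ univ.offDiag, (G.dist p.1 p.2 : ℝ) := by
    rw [sum_subset (subset_univ univ.offDiag) fun p _ hp => by simp_all, Fintype.sum_prod_type]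
    calc Fintype.card V * T = ∑ _u : V, T := by simp
      _ ≤ _ := sum_le_sum fun u _ => G.sum_range_sub_sum_le_sum_dist hconn hreg u k
  simp only [mul_assoc, sum_Icc_mul_add_mul_sub_sum_Icc]
  rw [one_div_mul_eq_div,
    ← mul_div_mul_left T _ (Nat.cast_ne_zero.mpr (Fintype.card_ne_zero (α := V)))]
  exact div_le_div_of_nonneg_right hsum <|
    mul_nonneg (Nat.cast_nonneg _) (sub_nonneg.mpr (by exact_mod_cast Fintype.card_pos (α := V)))

/-- Lower bound `d*` on the average shortest path length of a connected
`r`-regular graph on `N ≥ 2` vertices: for every `k ≥ 1`,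
`⟨D⟩ ≥ (∑_{j=1}^{k−1} j·r·(r−1)^{j−1} + k·R)/(N−1)`, where
`R = (N−1) − ∑_{j=1}^{k−1} r·(r−1)^{j−1}` and `⟨D⟩` is the average of
`dist(u,v)` over ordered pairs of distinct vertices. -/
theorem stmt_5 {V : Type*} [Fintype V] [DecidableEq V] (G : SimpleGraph V)
    [DecidableRel G.Adj] (N r : ℕ) (hN : Fintype.card V = N) (hN2 : 2 ≤ N)
    (hconn : G.Connected) (hreg : G.IsRegularOfDegree r)
    (k : ℕ) (hk : 1 ≤ k) :
    ((∑ j ∈ Finset.Icc 1 (k - 1), (j : ℝ) * (r : ℝ) * ((r : ℝ) - 1) ^ (j - 1))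
        + (k : ℝ) * (((N : ℝ) - 1)
            - ∑ j ∈ Finset.Icc 1 (k - 1), (r : ℝ) * ((r : ℝ) - 1) ^ (j - 1)))
        / ((N : ℝ) - 1)
      ≤ (1 / ((N : ℝ) * ((N : ℝ) - 1)))
          * ∑ p ∈ univ.offDiag, (G.dist p.1 p.2 : ℝ) :=
  stmt_5_general G N r hN hconn hreg k
end

section
/- (Throughput upper bound T ≤ Nr/(f·d*) for all-to-all traffic.) Let G be a connected r-regular simple graph on N ≥ 2 vertices. Consider the all-to-all family of commodities consisting of one commodity for every ordered pair (u,v) of distinct vertices, and let (g_{(u,v)}) be a concurrent multicommodity flow respecting unit capacities in which every commodity's value is at least T ≥ 0. Then for every integer k ≥ 1, T · ( ∑_{j=1}^{k−1} j·r(r−1)^{j−1} + k·R ) ≤ r, where R := (N−1) − ∑_{j=1}^{k−1} r(r−1)^{j−1}. -/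
/-!
A flow of value `x` from `s` to `t` uses at least `x · dist(s, t)` units of edge capacity, because
the potential `dist(s, ·)` rises by at most one along an edge while the flow carries `x` units from
potential `0` to potential `dist(s, t)`. Summing over all commodities and using unit capacities on
the `N r` directed edges gives `T · ∑ dist ≤ N r`.

On the other hand, in an `r`-regular graph at most `r (r - 1)^(j - 1)` vertices lie at distance
exactly `j` from `u`, since every vertex at distance `j ≥ 1` has a neighbour at distance `j - 1`.
Hence at least `(N - 1) - ∑_{i < j} r (r - 1)^(i - 1)` vertices lie at distance `≥ j`, and
summing over `j = 1, …, k` bounds `∑_v dist(u, v)` from below; summation by parts turns this sum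
into the bracket of the theorem.
-/

open Finset

/-- A flow from `s` to `t` of value `x` on the simple graph `G`:
nonnegative, supported on adjacent pairs, conserved at internal vertices,
with net outflow `x` at `s`. -/
def IsFlow {V : Type*} [Fintype V] (G : SimpleGraph V) (s t : V) (x : ℝ)
    (g : V → V → ℝ) : Prop :=
  (∀ u v, 0 ≤ g u v) ∧
  (∀ u v, ¬ G.Adj u v → g u v = 0) ∧
  (∀ w, w ≠ s → w ≠ t → (∑ u, g u w) = (∑ v, g w v)) ∧
  ((∑ v, g s v) - (∑ u, g u s) = x)

namespace IsFlow

variable {V : Type*} [Fintype V] {G : SimpleGraph V} {s t : V} {x : ℝ} {g : V → V → ℝ}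

lemma nonneg (hf : IsFlow G s t x g) (a b : V) : 0 ≤ g a b := hf.1 a b

lemma eq_zero_of_not_adj (hf : IsFlow G s t x g) {a b : V} (hab : ¬ G.Adj a b) : g a b = 0 :=
  hf.2.1 a b hab

lemma netInflow_eq_zero (hf : IsFlow G s t x g) {w : V} (hs : w ≠ s) (ht : w ≠ t) :
    ∑ u, g u w - ∑ v, g w v = 0 :=
  sub_eq_zero.mpr (hf.2.2.1 w hs ht)

lemma netInflow_source (hf : IsFlow G s t x g) : ∑ u, g u s - ∑ v, g s v = -x := by
  linarith [hf.2.2.2]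

lemma netInflow_target (hf : IsFlow G s t x g) (hst : s ≠ t) :
    ∑ u, g u t - ∑ v, g t v = x := by
  have htotal : ∑ w, (∑ u, g u w - ∑ v, g w v) = 0 := by
    rw [sum_sub_distrib, sum_comm, sub_self]
  rw [Fintype.sum_eq_add s t hst fun w hw => hf.netInflow_eq_zero hw.1 hw.2,
    hf.netInflow_source] at htotal
  linarith

lemma sum_mul_sub_potential (hf : IsFlow G s t x g) (hst : s ≠ t) (φ : V → ℝ) :
    ∑ a, ∑ b, g a b * (φ b - φ a) = x * (φ t - φ s) := by
  have hparts : ∑ a, ∑ b, g a b * (φ b - φ a) = ∑ w, (∑ u, g u w - ∑ v, g w v) * φ w := by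
    simp only [mul_sub, sub_mul, sum_sub_distrib, sum_mul]
    rw [sum_comm]
  rw [hparts, Fintype.sum_eq_add s t hst fun w hw => by
      rw [hf.netInflow_eq_zero hw.1 hw.2, zero_mul],
    hf.netInflow_source, hf.netInflow_target hst]
  ring

lemma mul_dist_le_sum (hf : IsFlow G s t x g) (hst : s ≠ t) (hconn : G.Connected) :
    x * G.dist s t ≤ ∑ a, ∑ b, g a b := by
  have hpot := hf.sum_mul_sub_potential hst fun w => (G.dist s w : ℝ)
  simp only [SimpleGraph.dist_self, Nat.cast_zero, sub_zero] at hpot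
  rw [← hpot]
  gcongr with a _ b _
  by_cases hab : G.Adj a b
  · have hstep : G.dist s b ≤ G.dist s a + 1 := by
      simpa [SimpleGraph.dist_eq_one_iff_adj.mpr hab] using
        hconn.dist_triangle (u := s) (v := a) (w := b)
    have hstep' : (G.dist s b : ℝ) - G.dist s a ≤ 1 := by
      rw [sub_le_iff_le_add']; exact_mod_cast hstep
    simpa using mul_le_mul_of_nonneg_left hstep' (hf.nonneg a b)
  · simp [hf.eq_zero_of_not_adj hab]

end IsFlow

lemma Finset.sum_offDiag_eq_sum_sum {α M : Type*} [Fintype α] [DecidableEq α] [AddCommMonoid M]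
    (f : α → α → M) (hf : ∀ a, f a a = 0) :
    ∑ p ∈ univ.offDiag, f p.1 p.2 = ∑ a, ∑ b, f a b := by
  have hdiag : ∑ p ∈ univ.diag, f p.1 p.2 = 0 :=
    sum_eq_zero fun p hp => by rw [(mem_diag.mp hp).2, hf]
  rw [← Fintype.sum_prod_type', ← univ_product_univ, ← diag_union_offDiag,
    sum_union (disjoint_diag_offDiag _), hdiag, zero_add]

lemma Finset.sum_Icc_card_filter_le_le_sum {α : Type*} (s : Finset α) (d : α → ℕ) (k : ℕ) :
    ∑ j ∈ Icc 1 k, #{a ∈ s | j ≤ d a} ≤ ∑ a ∈ s, d a := by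
  simp only [card_filter]
  rw [sum_comm]
  gcongr with a
  rw [← card_filter]
  calc #{j ∈ Icc 1 k | j ≤ d a} ≤ #(Icc 1 (d a)) := card_le_card fun j => by simp; omega
    _ = d a := by simp

lemma Finset.sum_Icc_sub_sum_Icc_eq {R : Type*} [CommRing R] (a : ℕ → R) (B : R) (k : ℕ) :
    ∑ j ∈ Icc 1 k, (B - ∑ i ∈ Icc 1 (j - 1), a i)
      = ∑ j ∈ Icc 1 (k - 1), j * a j + k * (B - ∑ j ∈ Icc 1 (k - 1), a j) := by
  rcases k with _ | m
  · simp
  induction m with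
  | zero => simp
  | succ m ih =>
    rw [sum_Icc_succ_top (by omega), ih]
    simp only [Nat.add_sub_cancel, sum_Icc_succ_top (by omega : 1 ≤ m + 1)]
    push_cast
    ring

namespace SimpleGraph

variable {V : Type*} {G : SimpleGraph V}

lemma Connected.exists_adj_dist_eq_of_dist_eq_add_one (hconn : G.Connected) {u v : V} {j : ℕ}
    (h : G.dist u v = j + 1) : ∃ w, G.Adj w v ∧ G.dist u w = j := by
  obtain ⟨p, hp⟩ := hconn.exists_walk_length_eq_dist v u
  rw [dist_comm] at hp
  cases p with
  | nil => simp at h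
  | @cons _ w _ hadj q =>
    refine ⟨w, hadj.symm, le_antisymm ?_ ?_⟩
    · simpa [h, dist_comm] using (dist_le q).trans_eq (by simpa [h] using hp)
    · have := hconn.dist_triangle (u := u) (v := w) (w := v)
      rw [h, dist_eq_one_iff_adj.mpr hadj.symm] at this
      omega

section Finite

variable [Fintype V] [DecidableRel G.Adj]

lemma sum_sum_sum_le_sum_degree {ι : Type*} (P : Finset ι) (g : ι → V → V → ℝ)
    (hsupp : ∀ i ∈ P, ∀ a b, ¬ G.Adj a b → g i a b = 0) (hcap : ∀ a b, ∑ i ∈ P, g i a b ≤ 1) :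
    ∑ i ∈ P, ∑ a, ∑ b, g i a b ≤ ∑ a, (G.degree a : ℝ) := by
  rw [sum_comm]
  gcongr with a
  rw [sum_comm, ← card_neighborFinset_eq_degree, neighborFinset_eq_filter, card_filter,
    Nat.cast_sum]
  gcongr with b
  split_ifs with hab
  · simpa using hcap a b
  · simp [sum_eq_zero fun i hi => hsupp i hi a b hab]

variable [DecidableEq V] {r : ℕ}

lemma card_neighborFinset_filter_dist_eq_add_one_le (hconn : G.Connected)
    (hreg : G.IsRegularOfDegree r) {u w : V} {j : ℕ} (hw : G.dist u w = j + 1) :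
    #{v ∈ G.neighborFinset w | G.dist u v = j + 2} ≤ r - 1 := by
  obtain ⟨w', hadj, hw'⟩ := hconn.exists_adj_dist_eq_of_dist_eq_add_one hw
  calc #{v ∈ G.neighborFinset w | G.dist u v = j + 2} ≤ #((G.neighborFinset w).erase w') :=
        card_le_card fun v hv => by
          simp only [mem_filter] at hv
          exact mem_erase.mpr ⟨by rintro rfl; omega, hv.1⟩
    _ = r - 1 := by
        rw [card_erase_of_mem (by simpa using hadj.symm), card_neighborFinset_eq_degree, hreg w]

lemma card_dist_eq_add_one_le (hconn : G.Connected) (hreg : G.IsRegularOfDegree r) (u : V)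
    {j : ℕ} (hj : 1 ≤ j) : #{v | G.dist u v = j + 1} ≤ #{v | G.dist u v = j} * (r - 1) := by
  obtain ⟨m, rfl⟩ : ∃ m, j = m + 1 := ⟨j - 1, by omega⟩
  calc #{v | G.dist u v = m + 2}
      ≤ #(({v | G.dist u v = m + 1} : Finset V).biUnion
          fun w => {v ∈ G.neighborFinset w | G.dist u v = m + 2}) :=
        card_le_card fun v hv => by
          obtain ⟨w, hadj, hw⟩ :=
            hconn.exists_adj_dist_eq_of_dist_eq_add_one (mem_filter.mp hv).2
          simp only [mem_biUnion, mem_filter, mem_univ, true_and, mem_neighborFinset]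
          exact ⟨w, hw, hadj, (mem_filter.mp hv).2⟩
    _ ≤ ∑ w ∈ {v | G.dist u v = m + 1}, #{v ∈ G.neighborFinset w | G.dist u v = m + 2} :=
        card_biUnion_le
    _ ≤ ∑ w ∈ {v | G.dist u v = m + 1}, (r - 1) :=
        sum_le_sum fun w hw =>
          card_neighborFinset_filter_dist_eq_add_one_le hconn hreg (mem_filter.mp hw).2
    _ = #{v | G.dist u v = m + 1} * (r - 1) := by rw [sum_const, smul_eq_mul]

lemma card_dist_eq_le (hconn : G.Connected) (hreg : G.IsRegularOfDegree r) (u : V) {j : ℕ}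
    (hj : 1 ≤ j) : #{v | G.dist u v = j} ≤ r * (r - 1) ^ (j - 1) := by
  induction j, hj using Nat.le_induction with
  | base =>
    have hsphere : ({v | G.dist u v = 1} : Finset V) = G.neighborFinset u := by ext v; simp
    rw [hsphere, card_neighborFinset_eq_degree, hreg u]
    simp
  | succ j hj ih =>
    calc #{v | G.dist u v = j + 1} ≤ #{v | G.dist u v = j} * (r - 1) :=
          card_dist_eq_add_one_le hconn hreg u hj
      _ ≤ r * (r - 1) ^ (j - 1) * (r - 1) := Nat.mul_le_mul_right _ ih
      _ = r * (r - 1) ^ (j + 1 - 1) := by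
          rw [mul_assoc, ← pow_succ, Nat.sub_add_cancel hj, Nat.add_sub_cancel]

lemma card_le_one_add_sum_add_card_dist_ge (hconn : G.Connected) (hreg : G.IsRegularOfDegree r)
    (u : V) (j : ℕ) :
    Fintype.card V ≤ 1 + ∑ i ∈ Icc 1 (j - 1), r * (r - 1) ^ (i - 1) + #{v | j ≤ G.dist u v} := by
  set inner := (Icc 1 (j - 1)).biUnion fun i => ({v | G.dist u v = i} : Finset V)
  calc Fintype.card V ≤ #(insert u inner ∪ ({v | j ≤ G.dist u v} : Finset V)) := by
        rw [← card_univ]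
        refine card_le_card fun v _ => ?_
        rcases eq_or_ne v u with rfl | hne
        · exact mem_union_left _ (mem_insert_self _ _)
        by_cases hlt : G.dist u v < j
        · have hv : G.dist u v ∈ Icc 1 (j - 1) :=
            mem_Icc.mpr ⟨hconn.pos_dist_of_ne hne.symm, by omega⟩
          exact mem_union_left _ (mem_insert_of_mem (mem_biUnion.mpr ⟨_, hv, by simp⟩))
        · exact mem_union_right _ (by simpa using not_lt.mp hlt)
    _ ≤ 1 + #inner + #{v | j ≤ G.dist u v} := by
        grw [card_union_le, card_insert_le, add_comm #inner]
    _ ≤ 1 + ∑ i ∈ Icc 1 (j - 1), r * (r - 1) ^ (i - 1) + #{v | j ≤ G.dist u v} := by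
        grw [card_biUnion_le]
        gcongr with i hi
        exact card_dist_eq_le hconn hreg u (mem_Icc.mp hi).1

lemma sum_Icc_sub_le_sum_dist (hconn : G.Connected) (hreg : G.IsRegularOfDegree r) (u : V)
    (k : ℕ) :
    ∑ j ∈ Icc 1 k, ((Fintype.card V : ℝ) - 1 - ∑ i ∈ Icc 1 (j - 1), (r : ℝ) * (r - 1) ^ (i - 1))
      ≤ ∑ v, (G.dist u v : ℝ) := by
  -- `r - 1` truncates only at `r = 0`, where the factor `r` vanishes anyway.
  have hcast (i : ℕ) : ((r * (r - 1) ^ i : ℕ) : ℝ) = r * ((r : ℝ) - 1) ^ i := by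
    rcases r with _ | r <;> simp
  calc _ ≤ ∑ j ∈ Icc 1 k, (#{v | j ≤ G.dist u v} : ℝ) := by
        gcongr with j
        have := card_le_one_add_sum_add_card_dist_ge hconn hreg u j
        have : (Fintype.card V : ℝ) ≤ 1 + ∑ i ∈ Icc 1 (j - 1), (r : ℝ) * (r - 1) ^ (i - 1)
            + #{v | j ≤ G.dist u v} := by
          simpa [hcast] using (Nat.cast_le (α := ℝ)).mpr this
        linarith
    _ ≤ ∑ v, (G.dist u v : ℝ) := by
        exact_mod_cast sum_Icc_card_filter_le_le_sum univ (G.dist u) k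

theorem mul_sum_sum_dist_le_sum_degree (hconn : G.Connected) {x : V → V → ℝ}
    {g : V → V → V → V → ℝ} (hflow : ∀ u v, u ≠ v → IsFlow G u v (x u v) (g u v))
    (hcap : ∀ a b, ∑ p ∈ univ.offDiag, g p.1 p.2 a b ≤ 1) {T : ℝ}
    (hTx : ∀ u v, u ≠ v → T ≤ x u v) :
    T * ∑ u, ∑ v, (G.dist u v : ℝ) ≤ ∑ a, (G.degree a : ℝ) := by
  calc T * ∑ u, ∑ v, (G.dist u v : ℝ) = ∑ p ∈ univ.offDiag, T * G.dist p.1 p.2 := by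
        rw [sum_offDiag_eq_sum_sum (fun u v => T * (G.dist u v : ℝ)) fun u => by simp]
        simp_rw [mul_sum]
    _ ≤ ∑ p ∈ univ.offDiag, ∑ a, ∑ b, g p.1 p.2 a b := by
        gcongr with p hp
        have hne := (mem_offDiag.mp hp).2.2
        exact (mul_le_mul_of_nonneg_right (hTx _ _ hne) (Nat.cast_nonneg _)).trans
          ((hflow _ _ hne).mul_dist_le_sum hne hconn)
    _ ≤ ∑ a, (G.degree a : ℝ) :=
        sum_sum_sum_le_sum_degree univ.offDiag (fun p : V × V => g p.1 p.2)
          (fun p hp a b => (hflow _ _ (mem_offDiag.mp hp).2.2).eq_zero_of_not_adj) hcap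

end Finite

end SimpleGraph

theorem stmt_6_general {V : Type*} [Fintype V] [DecidableEq V] (G : SimpleGraph V)
    [DecidableRel G.Adj] (N r : ℕ) (hN : Fintype.card V = N)
    (hconn : G.Connected) (hreg : G.IsRegularOfDegree r)
    (x : V → V → ℝ) (g : V → V → V → V → ℝ)
    (hflow : ∀ u v, u ≠ v → IsFlow G u v (x u v) (g u v))
    (hcap : ∀ a b, (∑ p ∈ univ.offDiag, g p.1 p.2 a b) ≤ 1)
    (T : ℝ) (hT : 0 ≤ T) (hTx : ∀ u v, u ≠ v → T ≤ x u v)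
    (k : ℕ) :
    T * ((∑ j ∈ Finset.Icc 1 (k - 1), (j : ℝ) * (r : ℝ) * ((r : ℝ) - 1) ^ (j - 1))
          + (k : ℝ) * (((N : ℝ) - 1)
              - ∑ j ∈ Finset.Icc 1 (k - 1), (r : ℝ) * ((r : ℝ) - 1) ^ (j - 1)))
      ≤ (r : ℝ) := by
  simp_rw [mul_assoc (_ : ℝ) (r : ℝ), ← sum_Icc_sub_sum_Icc_eq]
  set Q := ∑ j ∈ Icc 1 k, ((N : ℝ) - 1 - ∑ i ∈ Icc 1 (j - 1), (r : ℝ) * (r - 1) ^ (i - 1))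
  have hNpos : (0 : ℝ) < N := by
    have := hconn.nonempty
    rw [← hN]; exact_mod_cast Fintype.card_pos
  have hdist : N * Q ≤ ∑ u, ∑ v, (G.dist u v : ℝ) := by
    calc N * Q = ∑ _u : V, Q := by simp [hN]
      _ ≤ _ := sum_le_sum fun u _ => by
          simpa only [hN] using G.sum_Icc_sub_le_sum_dist hconn hreg u k
  have hdegree : ∑ a, (G.degree a : ℝ) = N * r := by simp [hreg _, hN]
  refine le_of_mul_le_mul_left ?_ hNpos
  calc N * (T * Q) = T * (N * Q) := by ring
    _ ≤ T * ∑ u, ∑ v, (G.dist u v : ℝ) := mul_le_mul_of_nonneg_left hdist hT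
    _ ≤ N * r := hdegree ▸ G.mul_sum_sum_dist_le_sum_degree hconn hflow hcap hTx

/-- Throughput upper bound `T ≤ Nr/(f·d*)` for all-to-all traffic on a
connected `r`-regular graph on `N ≥ 2` vertices: for a concurrent
multicommodity flow with one commodity per ordered pair of distinct vertices,
respecting unit capacities, with every commodity value at least `T ≥ 0`, we
have for every `k ≥ 1` that
`T · (∑_{j=1}^{k−1} j·r·(r−1)^{j−1} + k·R) ≤ r`, where
`R = (N−1) − ∑_{j=1}^{k−1} r·(r−1)^{j−1}`. -/
theorem stmt_6 {V : Type*} [Fintype V] [DecidableEq V] (G : SimpleGraph V)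
    [DecidableRel G.Adj] (N r : ℕ) (hN : Fintype.card V = N) (hN2 : 2 ≤ N)
    (hconn : G.Connected) (hreg : G.IsRegularOfDegree r)
    (x : V → V → ℝ) (g : V → V → V → V → ℝ)
    (hflow : ∀ u v, u ≠ v → IsFlow G u v (x u v) (g u v))
    (hcap : ∀ a b, (∑ p ∈ univ.offDiag, g p.1 p.2 a b) ≤ 1)
    (T : ℝ) (hT : 0 ≤ T) (hTx : ∀ u v, u ≠ v → T ≤ x u v)
    (k : ℕ) (hk : 1 ≤ k) :
    T * ((∑ j ∈ Finset.Icc 1 (k - 1), (j : ℝ) * (r : ℝ) * ((r : ℝ) - 1) ^ (j - 1))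
          + (k : ℝ) * (((N : ℝ) - 1)
              - ∑ j ∈ Finset.Icc 1 (k - 1), (r : ℝ) * ((r : ℝ) - 1) ^ (j - 1)))
      ≤ (r : ℝ) :=
  stmt_6_general G N r hN hconn hreg x g hflow hcap T hT hTx k
end
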